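/- For integers k > ℓ ≥ 0 and n > 2k, every n-vertex k-uniform hypergraph H with at least 2·n^{k - 2^{-ℓ}} edges contains a copy of H(k, ℓ) as a subgraph. -/

import Mathlib

/-- Vertex set of the hypergraph H(k, ℓ): two stationary parts A, B of size k-ℓ
and dynamic vertices u₁,…,u_ℓ (left) and v₁,…,v_ℓ (right). -/
abbrev HklVertex (k ℓ : ℕ) := (Fin (k - ℓ) ⊕ Fin (k - ℓ)) ⊕ (Fin ℓ ⊕ Fin ℓ)

/-- The stationary part A of H(k, ℓ). -/
def hklA (k ℓ : ℕ) : Finset (HklVertex k ℓ) :=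
  Finset.univ.image (fun i : Fin (k - ℓ) => Sum.inl (Sum.inl i))

/-- The stationary part B of H(k, ℓ). -/
def hklB (k ℓ : ℕ) : Finset (HklVertex k ℓ) :=
  Finset.univ.image (fun i : Fin (k - ℓ) => Sum.inl (Sum.inr i))

/-- The hypergraph H(k, ℓ): edges are Z ∪ {one of u_i, v_i for each i ≤ ℓ}
with Z ∈ {A, B}. -/
def hkl (k ℓ : ℕ) : Finset (Finset (HklVertex k ℓ)) :=
  Finset.univ.image (fun p : Bool × (Fin ℓ → Bool) =>
    (if p.1 then hklA k ℓ else hklB k ℓ) ∪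
      Finset.univ.image (fun i : Fin ℓ =>
        Sum.inr (if p.2 i then Sum.inl i else Sum.inr i)))

/-!
Induction on `ℓ`, keeping `a = k - ℓ` fixed. For `ℓ = 0`, `H(k, 0)` is a pair of disjoint edges,
and a family of `k`-sets with no two disjoint members has at most `C(n-1, k-1) ≤ n^(k-1)`
members by Erdős–Ko–Rado. For `ℓ ≥ 1`, `H(k, ℓ)` is the suspension of `H(k-1, ℓ-1)`: every edge
gets one of the two new apexes `u_ℓ`, `v_ℓ`. So it suffices to find `u ≠ v` whose common link
(the `(k-1)`-sets `s` with `s ∪ {u}, s ∪ {v} ∈ H`) is dense enough for the induction hypothesis.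
With `d(s)` the number of edges through a `(k-1)`-set `s`, the common links have total size
`∑ d(s)^2 - ∑ d(s) ≥ (k |H|)^2 / n^(k-1) - k |H|` by Cauchy–Schwarz, so some pair has a common
link with at least `2 n^(k-1-2t)` sets when `|H| ≥ 2 n^(k-t)` and `t ≤ 1/2`; with `t = 2^(-ℓ)`
this is exactly the hypothesis for `H(k-1, ℓ-1)`.
-/

open Finset Function

section

variable {α β γ : Type*}

def ContainsCopy [DecidableEq α] (H : Finset (Finset α)) (F : Finset (Finset β)) : Prop :=
  ∃ f : β → α, Injective f ∧ ∀ e ∈ F, e.image f ∈ H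

theorem ContainsCopy.trans [DecidableEq α] [DecidableEq β] {H : Finset (Finset α)}
    {G : Finset (Finset β)} {F : Finset (Finset γ)} (hHG : ContainsCopy H G)
    (hGF : ContainsCopy G F) : ContainsCopy H F := by
  obtain ⟨f, hf, hfG⟩ := hHG
  obtain ⟨g, hg, hgF⟩ := hGF
  exact ⟨f ∘ g, hf.comp hg, fun e he => by rw [← image_image]; exact hfG _ (hgF e he)⟩

def suspension [DecidableEq β] (F : Finset (Finset β)) : Finset (Finset (β ⊕ Bool)) :=
  (F ×ˢ univ).image fun p => insert (Sum.inr p.2) (p.1.image Sum.inl)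

theorem card_powersetCard_univ_le [Fintype α] (k : ℕ) :
    #((univ : Finset α).powersetCard k) ≤ Fintype.card α ^ k := by
  rw [card_powersetCard, card_univ]
  exact Nat.choose_le_pow _ _

section Link

variable [Fintype α] [DecidableEq α]

def extensions (H : Finset (Finset α)) (s : Finset α) : Finset α :=
  {v | v ∉ s ∧ insert v s ∈ H}

def commonLink (H : Finset (Finset α)) (k : ℕ) (u v : α) : Finset (Finset α) :=
  {s ∈ univ.powersetCard k | u ∈ extensions H s ∧ v ∈ extensions H s}

variable {H : Finset (Finset α)} {k : ℕ}

theorem card_of_mem_commonLink {u v : α} {s : Finset α} (hs : s ∈ commonLink H k u v) :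
    #s = k :=
  (mem_powersetCard.1 (mem_filter.1 hs).1).2

theorem ContainsCopy.suspension_of_commonLink [DecidableEq β] {u v : α} {F : Finset (Finset β)}
    (huv : u ≠ v) (hF : ∀ x, ∃ e ∈ F, x ∈ e)
    (h : ContainsCopy (commonLink H k u v) F) : ContainsCopy H (suspension F) := by
  obtain ⟨f, hf, hfF⟩ := h
  have hlink : ∀ e ∈ F, u ∉ e.image f ∧ v ∉ e.image f ∧
      insert u (e.image f) ∈ H ∧ insert v (e.image f) ∈ H := by
    intro e he
    have := hfF e he
    simp only [commonLink, extensions, mem_filter, mem_univ, true_and] at this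
    tauto
  have hfu : ∀ x, f x ≠ u ∧ f x ≠ v := by
    intro x
    obtain ⟨e, he, hx⟩ := hF x
    have hfx := mem_image_of_mem f hx
    exact ⟨fun h => (hlink e he).1 (h ▸ hfx), fun h => (hlink e he).2.1 (h ▸ hfx)⟩
  refine ⟨Sum.elim f fun b => if b then u else v, ?_, ?_⟩
  · refine hf.sumElim ?_ ?_
    · intro b c
      cases b <;> cases c <;> simp [huv, huv.symm]
    · intro x b
      cases b <;> simp [hfu x]
  · simp only [suspension, mem_image, mem_product, mem_univ, and_true, Prod.exists]
    rintro _ ⟨e, b, he, rfl⟩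
    rw [image_insert, image_image, Sum.elim_comp_inl]
    cases b <;> simp [hlink e he]

theorem sum_card_extensions (hH : ∀ e ∈ H, #e = k + 1) :
    ∑ s ∈ univ.powersetCard k, #(extensions H s) = (k + 1) * #H := by
  rw [mul_comm, ← sum_const_nat hH, ← card_sigma, ← card_sigma]
  refine card_nbij' (fun p => ⟨insert p.2 p.1, p.2⟩) (fun p => ⟨p.1.erase p.2, p.2⟩) ?_ ?_ ?_ ?_
  · rintro ⟨s, v⟩ hsv
    simp_all [extensions]
  · rintro ⟨e, v⟩ hev
    simp_all [extensions, card_erase_of_mem]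
  · rintro ⟨s, v⟩ hsv
    simp_all [extensions]
  · rintro ⟨e, v⟩ hev
    simp_all

theorem sum_card_commonLink :
    ∑ p ∈ (univ : Finset α).offDiag, #(commonLink H k p.1 p.2) =
      ∑ s ∈ univ.powersetCard k, #(extensions H s).offDiag := by
  simp only [commonLink, card_filter]
  rw [sum_comm]
  refine sum_congr rfl fun s _ => ?_
  rw [← card_filter]
  congr 1
  ext p
  simp only [mem_filter, mem_offDiag, mem_univ, true_and]
  tauto

theorem succ_mul_card_le_pow (hH : ∀ e ∈ H, #e = k + 1) :
    (k + 1) * #H ≤ Fintype.card α ^ (k + 1) := by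
  rw [← sum_card_extensions hH]
  calc ∑ s ∈ univ.powersetCard k, #(extensions H s)
      ≤ #((univ : Finset α).powersetCard k) * Fintype.card α :=
        sum_le_card_nsmul _ _ _ fun s _ => card_le_univ _
    _ ≤ Fintype.card α ^ k * Fintype.card α := by
      gcongr
      exact card_powersetCard_univ_le k
    _ = Fintype.card α ^ (k + 1) := (pow_succ _ _).symm

theorem sq_succ_mul_card_le (hH : ∀ e ∈ H, #e = k + 1) :
    ((k + 1) * #H) ^ 2 ≤ Fintype.card α ^ k *
      (∑ p ∈ (univ : Finset α).offDiag, #(commonLink H k p.1 p.2) + (k + 1) * #H) := by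
  have hsq : ∑ p ∈ (univ : Finset α).offDiag, #(commonLink H k p.1 p.2) + (k + 1) * #H =
      ∑ s ∈ univ.powersetCard k, #(extensions H s) ^ 2 := by
    rw [sum_card_commonLink, ← sum_card_extensions hH, ← sum_add_distrib]
    refine sum_congr rfl fun s _ => ?_
    rw [offDiag_card, sq, Nat.sub_add_cancel (Nat.le_mul_self _)]
  rw [hsq, ← sum_card_extensions hH]
  refine sq_sum_le_card_mul_sum_sq.trans ?_
  gcongr
  exact card_powersetCard_univ_le k

theorem exists_two_mul_rpow_le_card_commonLink [Nonempty α] {t : ℝ} (ht : 2 * t ≤ 1)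
    (hH : ∀ e ∈ H, #e = k + 1)
    (hcard : 2 * (Fintype.card α : ℝ) ^ ((k : ℝ) + 1 - t) ≤ #H) :
    ∃ u v, u ≠ v ∧ 2 * (Fintype.card α : ℝ) ^ ((k : ℝ) - 2 * t) ≤ #(commonLink H k u v) := by
  by_contra! hsmall
  have hD_le : ((k + 1) * #H : ℝ) ≤ Fintype.card α * Fintype.card α ^ k := by
    rw [← pow_succ']; exact_mod_cast succ_mul_card_le_pow hH
  have hCS : ((k + 1) * #H : ℝ) ^ 2 ≤ Fintype.card α ^ k *
      (∑ p ∈ (univ : Finset α).offDiag, (#(commonLink H k p.1 p.2) : ℝ) + (k + 1) * #H) := by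
    exact_mod_cast sq_succ_mul_card_le hH
  have hP : ∑ p ∈ (univ : Finset α).offDiag, (#(commonLink H k p.1 p.2) : ℝ) ≤
      Fintype.card α ^ 2 * (2 * Fintype.card α ^ ((k : ℝ) - 2 * t)) := by
    refine (sum_le_sum fun p hp => (hsmall p.1 p.2 (mem_offDiag.1 hp).2.2).le).trans ?_
    rw [sum_const, nsmul_eq_mul, offDiag_card, card_univ]
    gcongr
    exact_mod_cast (Nat.sub_le _ _).trans (Nat.pow_two _).ge
  have hD_ge : 2 * (Fintype.card α : ℝ) ^ ((k : ℝ) + 1 - t) ≤ (k + 1) * #H :=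
    hcard.trans (le_mul_of_one_le_left (Nat.cast_nonneg _) (by linarith [k.cast_nonneg (α := ℝ)]))
  have hx : (1 : ℝ) ≤ Fintype.card α := Nat.one_le_cast.mpr Fintype.card_pos
  generalize (Fintype.card α : ℝ) = x at *
  generalize ∑ p ∈ (univ : Finset α).offDiag, (#(commonLink H k p.1 p.2) : ℝ) = P at *
  generalize ((k : ℝ) + 1) * #H = D at *
  have hx0 : 0 < x := by linarith
  have hX_sq : x * (x ^ k) ^ 2 ≤ (x ^ ((k : ℝ) + 1 - t)) ^ 2 := by
    rw [← Real.rpow_natCast, ← Real.rpow_natCast, ← Real.rpow_natCast, ← Real.rpow_mul hx0.le,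
      ← Real.rpow_mul hx0.le, ← Real.rpow_one_add' hx0.le (by positivity)]
    exact Real.rpow_le_rpow_of_exponent_le hx (by push_cast; linarith)
  have hE : x ^ 2 * (2 * x ^ ((k : ℝ) - 2 * t)) * x ^ k = 2 * (x ^ ((k : ℝ) + 1 - t)) ^ 2 := by
    rw [← Real.rpow_natCast x k, ← Real.rpow_two, ← Real.rpow_two, ← Real.rpow_mul hx0.le]
    calc _ = 2 * (x ^ (2 : ℝ) * x ^ ((k : ℝ) - 2 * t) * x ^ (k : ℝ)) := by ring
      _ = _ := by rw [← Real.rpow_add hx0, ← Real.rpow_add hx0]; ring_nf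
  have hX : 0 < x ^ ((k : ℝ) + 1 - t) := by positivity
  -- with `N = x ^ k` and `X = x ^ (k + 1 - t)`: `2 X² ≥ P N ≥ D² - D N ≥ 4 X² - X²`
  nlinarith [mul_le_mul_of_nonneg_right hP (pow_nonneg hx0.le k),
    mul_self_le_mul_self (by positivity) hD_ge,
    mul_le_mul_of_nonneg_right hD_le (pow_nonneg hx0.le k)]

end Link

theorem card_le_choose_of_intersecting [Fintype α] [DecidableEq α] {𝒜 : Finset (Finset α)}
    {r : ℕ} (h𝒜 : (𝒜 : Set (Finset α)).Intersecting) (hsized : ∀ s ∈ 𝒜, #s = r)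
    (hr : r ≤ Fintype.card α / 2) : #𝒜 ≤ (Fintype.card α - 1).choose (r - 1) := by
  let σ := (Fintype.equivFin α).finsetCongr
  rw [← card_map σ.toEmbedding]
  refine erdos_ko_rado ?_ ?_ hr
  · simp only [coe_map, Equiv.coe_toEmbedding]
    rintro _ ⟨s, hs, rfl⟩ _ ⟨t, ht, rfl⟩
    simpa [σ, disjoint_map] using h𝒜 hs ht
  · simp only [coe_map, Equiv.coe_toEmbedding]
    rintro _ ⟨s, hs, rfl⟩
    simpa [σ] using hsized s hs

theorem exists_disjoint_of_pow_lt_card [Fintype α] [DecidableEq α] {H : Finset (Finset α)}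
    {k : ℕ} (hH : ∀ e ∈ H, #e = k) (hk : 2 * k ≤ Fintype.card α)
    (hcard : Fintype.card α ^ (k - 1) < #H) :
    ∃ e ∈ H, ∃ f ∈ H, Disjoint e f := by
  by_contra! h
  refine hcard.not_ge ((card_le_choose_of_intersecting (fun e he f hf => h e he f hf) hH
    (by omega)).trans ?_)
  exact (Nat.choose_le_pow _ _).trans (Nat.pow_le_pow_left (Nat.sub_le _ _) _)

section HklWithPartSize

variable {a ℓ : ℕ}

def hklEdge (a ℓ : ℕ) (b : Bool) (c : Fin ℓ → Bool) :
    Finset ((Fin a ⊕ Fin a) ⊕ (Fin ℓ ⊕ Fin ℓ)) :=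
  (if b then univ.image (fun i : Fin a => Sum.inl (Sum.inl i))
    else univ.image (fun i : Fin a => Sum.inl (Sum.inr i))) ∪
    univ.image fun i : Fin ℓ => Sum.inr (if c i then Sum.inl i else Sum.inr i)

/-- `H(k, ℓ)` with the size `a = k - ℓ` of `A` and `B` as parameter instead of `k`, so that `ℓ` can
vary while `A` and `B` stay fixed; `hkl k ℓ` is `hklWithPartSize (k - ℓ) ℓ` by definition. -/
def hklWithPartSize (a ℓ : ℕ) : Finset (Finset ((Fin a ⊕ Fin a) ⊕ (Fin ℓ ⊕ Fin ℓ))) :=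
  univ.image fun p : Bool × (Fin ℓ → Bool) => hklEdge a ℓ p.1 p.2

@[simp] theorem mem_hklEdge_inl_inl {b c} {i : Fin a} :
    Sum.inl (Sum.inl i) ∈ hklEdge a ℓ b c ↔ b = true := by
  cases b <;> simp [hklEdge]

@[simp] theorem mem_hklEdge_inl_inr {b c} {i : Fin a} :
    Sum.inl (Sum.inr i) ∈ hklEdge a ℓ b c ↔ b = false := by
  cases b <;> simp [hklEdge]

@[simp] theorem mem_hklEdge_inr_inl {b c} {i : Fin ℓ} :
    Sum.inr (Sum.inl i) ∈ hklEdge a ℓ b c ↔ c i = true := by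
  cases b <;> simp [hklEdge, ite_eq_iff]

@[simp] theorem mem_hklEdge_inr_inr {b c} {i : Fin ℓ} :
    Sum.inr (Sum.inr i) ∈ hklEdge a ℓ b c ↔ c i = false := by
  cases b <;> simp [hklEdge, ite_eq_iff]

theorem exists_mem_hklWithPartSize (x : (Fin a ⊕ Fin a) ⊕ (Fin ℓ ⊕ Fin ℓ)) :
    ∃ e ∈ hklWithPartSize a ℓ, x ∈ e := by
  have hedge : ∀ b c, hklEdge a ℓ b c ∈ hklWithPartSize a ℓ := fun b c =>
    mem_image_of_mem _ (mem_univ (b, c))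
  rcases x with (i | i) | (i | i)
  · exact ⟨_, hedge true fun _ => true, by simp⟩
  · exact ⟨_, hedge false fun _ => true, by simp⟩
  · exact ⟨_, hedge true fun _ => true, by simp⟩
  · exact ⟨_, hedge true fun _ => false, by simp⟩

theorem containsCopy_suspension_hklWithPartSize :
    ContainsCopy (suspension (hklWithPartSize a ℓ)) (hklWithPartSize a (ℓ + 1)) := by
  let g : (Fin a ⊕ Fin a) ⊕ (Fin (ℓ + 1) ⊕ Fin (ℓ + 1)) →
      ((Fin a ⊕ Fin a) ⊕ (Fin ℓ ⊕ Fin ℓ)) ⊕ Bool :=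
    Sum.elim (fun z => Sum.inl (Sum.inl z)) <| Sum.elim
      (Fin.lastCases (Sum.inr true) fun j => Sum.inl (Sum.inr (Sum.inl j)))
      (Fin.lastCases (Sum.inr false) fun j => Sum.inl (Sum.inr (Sum.inr j)))
  refine ⟨g, ?_, ?_⟩
  · rintro ((i | i) | (i | i)) ((j | j) | (j | j)) h <;>
      (try induction i using Fin.lastCases) <;> (try induction j using Fin.lastCases) <;>
      simp_all [g]
  · simp only [hklWithPartSize, mem_image, mem_univ, true_and, Prod.exists, forall_exists_index]
    rintro _ b c rfl
    refine mem_image.2 ⟨(hklEdge a ℓ b fun j => c j.castSucc, c (Fin.last ℓ)), by simp, ?_⟩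
    ext x
    rcases x with ((x | x) | (x | x)) | x <;> simp [g, Sum.exists, Fin.exists_fin_succ']
    cases x <;> cases c (Fin.last ℓ) <;> simp

theorem containsCopy_hklWithPartSize_zero [DecidableEq α] {H : Finset (Finset α)}
    {e f : Finset α} (he : e ∈ H) (hf : f ∈ H) (hea : #e = a) (hfa : #f = a)
    (hef : Disjoint e f) : ContainsCopy H (hklWithPartSize a 0) := by
  obtain ⟨φ, rfl⟩ := Embedding.exists_of_card_eq_finset (α := Fin a) (s := e) (by simp [hea])
  obtain ⟨ψ, rfl⟩ := Embedding.exists_of_card_eq_finset (α := Fin a) (s := f) (by simp [hfa])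
  refine ⟨Sum.elim (Sum.elim φ ψ) isEmptyElim, ?_, ?_⟩
  · refine (φ.injective.sumElim ψ.injective fun i j hij => ?_).sumElim
      (injective_of_subsingleton _) fun _ y => isEmptyElim y
    exact disjoint_left.1 hef (mem_map_of_mem φ (mem_univ i))
      (hij ▸ mem_map_of_mem ψ (mem_univ j))
  · simp only [hklWithPartSize, mem_image, mem_univ, true_and, Prod.exists, forall_exists_index]
    rintro _ b c rfl
    cases b
    · simpa [hklEdge, image_image, comp_def, map_eq_image] using hf
    · simpa [hklEdge, image_image, comp_def, map_eq_image] using he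

end HklWithPartSize

theorem containsCopy_hklWithPartSize [Fintype α] [DecidableEq α] {a : ℕ} (ha : 0 < a) (ℓ : ℕ)
    {H : Finset (Finset α)} (hH : ∀ e ∈ H, #e = a + ℓ) (hn : 2 * (a + ℓ) ≤ Fintype.card α)
    (hcard : 2 * (Fintype.card α : ℝ) ^ (((a + ℓ : ℕ) : ℝ) - ((2 : ℝ) ^ ℓ)⁻¹) ≤ #H) :
    ContainsCopy H (hklWithPartSize a ℓ) := by
  induction ℓ generalizing H with
  | zero =>
    have hpow : (1 : ℝ) ≤ (Fintype.card α : ℝ) ^ (a - 1) :=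
      one_le_pow₀ (Nat.one_le_cast.2 (by omega))
    rw [pow_zero, inv_one, add_zero, ← Nat.cast_pred ha, Real.rpow_natCast] at hcard
    obtain ⟨e, he, f, hf, hef⟩ := exists_disjoint_of_pow_lt_card hH (by omega)
      (by exact_mod_cast (by linarith : (Fintype.card α : ℝ) ^ (a - 1) < #H))
    exact containsCopy_hklWithPartSize_zero he hf (hH e he) (hH f hf) hef
  | succ ℓ ih =>
    have : Nonempty α := Fintype.card_pos_iff.1 (by omega)
    have htwo : (2 : ℝ) * ((2 : ℝ) ^ (ℓ + 1))⁻¹ = ((2 : ℝ) ^ ℓ)⁻¹ := by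
      rw [pow_succ]; field_simp
    obtain ⟨u, v, huv, hlink⟩ := exists_two_mul_rpow_le_card_commonLink (k := a + ℓ)
      (t := ((2 : ℝ) ^ (ℓ + 1))⁻¹) (htwo ▸ inv_le_one_of_one_le₀ (one_le_pow₀ one_le_two)) hH
      (by convert hcard using 4; push_cast; ring)
    refine ContainsCopy.trans ?_ containsCopy_suspension_hklWithPartSize
    refine ContainsCopy.suspension_of_commonLink huv exists_mem_hklWithPartSize
      (ih (fun s hs => card_of_mem_commonLink hs) (by omega) ?_)
    rwa [← htwo]

end

/-- For k > ℓ ≥ 0 and n > 2k, every n-vertex k-uniform hypergraph H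
with at least 2·n^{k - 2^{-ℓ}} edges contains a copy of H(k, ℓ). -/
theorem stmt_7 {α : Type*} [Fintype α] [DecidableEq α] (k ℓ : ℕ) (hℓk : ℓ < k)
    (hn : 2 * k < Fintype.card α)
    (H : Finset (Finset α)) (hunif : ∀ e ∈ H, e.card = k)
    (hcard : 2 * (Fintype.card α : ℝ) ^ ((k : ℝ) - (2 : ℝ) ^ (-(ℓ : ℝ))) ≤ (H.card : ℝ)) :
    ∃ f : HklVertex k ℓ → α, Function.Injective f ∧
      ∀ e ∈ hkl k ℓ, e.image f ∈ H := by
  have hk : k - ℓ + ℓ = k := by omega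
  rw [Real.rpow_neg zero_le_two, Real.rpow_natCast] at hcard
  exact containsCopy_hklWithPartSize (a := k - ℓ) (by omega) ℓ
    (fun e he => (hunif e he).trans hk.symm) (by omega) (by rwa [hk])
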